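/- For all m, n ∈ ℕ and every Lipschitz function f: ℓ_1 → ℝ with f(0)=0, the operators Q_n on Lip_0(ℓ_1) satisfy Q_m(Q_n(f)) = Q_{min(m,n)}(f). -/

import Mathlib

noncomputable section

open Filter Topology
open scoped Classical

/-- The sign `±1` associated with a Boolean. -/
def bsgn (b : Bool) : ℝ := if b then 1 else -1

/-- The hypercube `C(y,R) = {x : max_i |x_i − y_i| ≤ R/2}` with centre `y` and
edge length `R`. -/
def cube {n : ℕ} (y : Fin n → ℝ) (R : ℝ) : Set (Fin n → ℝ) :=
  {x | ∀ i, |x i - y i| ≤ R / 2}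

/-- The vertex `A_δ(y,R) = y + (R/2)δ` of the hypercube `C(y,R)`, `δ ∈ {−1,1}^n`. -/
def vertex {n : ℕ} (y : Fin n → ℝ) (R : ℝ) (δ : Fin n → Bool) : Fin n → ℝ :=
  fun i => y i + R / 2 * bsgn (δ i)

/-- A function `Φ` has property (AF) on a (convex) set `B ⊆ ℝ^n` if its restriction
to every segment contained in `B` and parallel to a coordinate axis is affine. -/
def HasAF {n : ℕ} (B : Set (Fin n → ℝ)) (Φ : (Fin n → ℝ) → ℝ) : Prop :=
  ∀ a b : Fin n → ℝ, a ∈ B → b ∈ B → (∃ i : Fin n, ∀ j, j ≠ i → a j = b j) →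
    ∀ t : ℝ, t ∈ Set.Icc (0 : ℝ) 1 →
      Φ (fun j => a j + t * (b j - a j)) = (1 - t) * Φ a + t * Φ b

/-- The coordinatewise-affine interpolation `Λ(f, C(y,R))` of `f` on the hypercube
`C(y,R)`: the unique function with property (AF) on `C(y,R)` agreeing with `f` at
all `2^n` vertices (written here in its explicit multilinear form). -/
def lam {n : ℕ} (f : (Fin n → ℝ) → ℝ) (y : Fin n → ℝ) (R : ℝ)
    (x : Fin n → ℝ) : ℝ :=
  ∑ δ : Fin n → Bool,
    (∏ i, if δ i then (x i - y i + R / 2) / R else 1 - (x i - y i + R / 2) / R) *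
      f (vertex y R δ)

/-- `g` is `L`-Lipschitz on the set `S` with respect to the `ℓ₁`-norm on `ℝ^n`. -/
def LipOnL1 {n : ℕ} (L : ℝ) (S : Set (Fin n → ℝ)) (g : (Fin n → ℝ) → ℝ) : Prop :=
  ∀ x ∈ S, ∀ x' ∈ S, |g x - g x'| ≤ L * ∑ i, |x i - x' i|
/-- `π_R(t)`: the nearest point to `t` in `[−R/2, R/2]`. -/
def clamp (R t : ℝ) : ℝ := max (-(R / 2)) (min (R / 2) t)

/-- `Π_R^n(x) = (π_R(x_1),…,π_R(x_n))`, the nearest-point retraction onto `C(0,R)`. -/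
def clampCube {n : ℕ} (R : ℝ) (x : Fin n → ℝ) : Fin n → ℝ := fun i => clamp R (x i)

/-- The point `x^{ε,y}_{h,k} = y + 2^{−k−1} ε + 2^{−k} (ε_1 h_1, …, ε_n h_n)`. -/
def gridPt {n : ℕ} (ε : Fin n → Bool) (y : Fin n → ℝ) (h : Fin n → ℕ) (k : ℕ) :
    Fin n → ℝ :=
  fun i => y i + (2 : ℝ) ^ (-(k : ℤ) - 1) * bsgn (ε i) +
    (2 : ℝ) ^ (-(k : ℤ)) * (bsgn (ε i) * (h i : ℝ))

/-- For `v ∈ C(0,2^n)`, an admissible choice of `ε ∈ {−1,1}^n` for a cube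
`C(x^{ε,0}_{h,n−1}, 2^{1−n})` of the canonical tiling containing `v`. -/
def epsChoice {n : ℕ} (v : Fin n → ℝ) : Fin n → Bool := fun i => 0 ≤ v i

/-- For `v ∈ C(0,2^n)`, an admissible choice of `h ∈ {0,…,2^{2n−2}−1}^n` for a cube
`C(x^{ε,0}_{h,n−1}, 2^{1−n})` of the canonical tiling containing `v`. -/
def hChoice (n : ℕ) (v : Fin n → ℝ) : Fin n → ℕ :=
  fun i => min (Int.toNat ⌊|v i| * (2 : ℝ) ^ ((n : ℤ) - 1)⌋) (2 ^ (2 * n - 2) - 1)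

/-- The operator `P_n`: `P_n(g)(u) = Λ(g, C(x^{ε,0}_{h,n−1}, 2^{1−n}))(Π_{2^n}^n(u))`,
where `ε ∈ {−1,1}^n` and `h ∈ {0,…,2^{2n−2}−1}^n` are (admissibly) chosen so that
`Π_{2^n}^n(u) ∈ C(x^{ε,0}_{h,n−1}, 2^{1−n})`. -/
def Pn (n : ℕ) (g : (Fin n → ℝ) → ℝ) (u : Fin n → ℝ) : ℝ :=
  lam g
    (gridPt (epsChoice (clampCube ((2 : ℝ) ^ n) u)) 0
      (hChoice n (clampCube ((2 : ℝ) ^ n) u)) (n - 1))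
    ((2 : ℝ) ^ (1 - (n : ℤ)))
    (clampCube ((2 : ℝ) ^ n) u)

/-- The Banach space `ℓ₁` of absolutely summable real sequences. -/
abbrev EllOne : Type := lp (fun _ : ℕ => ℝ) 1

/-- The canonical injection `τ_n : ℓ₁^n → ℓ₁`, `τ_n(x) = (x_1,…,x_n,0,0,…)`. -/
def tau (n : ℕ) (x : Fin n → ℝ) : EllOne :=
  ⟨fun j => if h : j < n then x ⟨j, h⟩ else 0, by
    refine (memℓp_zero ?_).of_exponent_ge zero_le
    refine (Set.finite_Iio n).subset fun j hj => ?_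
    simp only [Set.mem_setOf_eq] at hj
    by_contra hc
    simp only [Set.mem_Iio, not_lt] at hc
    exact hj (dif_neg (not_lt.mpr hc))⟩

/-- The canonical projection `ρ_n : ℓ₁ → ℓ₁^n`, `ρ_n(x) = (x_1,…,x_n)`. -/
def rho (n : ℕ) (x : EllOne) : Fin n → ℝ := fun i => x (i : ℕ)

/-- The operator `Q_n` on `Lip_0(ℓ₁)`: `Q_n(f)(x) = P_n(f ∘ τ_n)(ρ_n(x))`. -/
def Qn (n : ℕ) (f : EllOne → ℝ) (x : EllOne) : ℝ :=
  Pn n (fun u => f (tau n u)) (rho n x)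

/-- `V_n`: the set of all vertices of all the cubes `C(x^{ε,0}_{h,n−1}, 2^{1−n})`,
`ε ∈ {−1,1}^n`, `h ∈ {0,…,2^{2n−2}−1}^n`. -/
def Vn (n : ℕ) : Set (Fin n → ℝ) :=
  {v | ∃ (ε : Fin n → Bool) (h : Fin n → ℕ) (δ : Fin n → Bool),
    (∀ i, h i ≤ 2 ^ (2 * n - 2) - 1) ∧
    v = vertex (gridPt ε 0 h (n - 1)) ((2 : ℝ) ^ (1 - (n : ℤ))) δ}

open scoped NNReal

/-! `Pn n` reads its argument only at the vertices `Vn n` of a dyadic tiling of the cube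
`[-2^(n-1), 2^(n-1)]^n`, reproduces it there, and is multi-affine on each tile.

If `m ≤ n`, the vertices of the level-`m` tiling, padded by zeros, are vertices of the level-`n`
tiling, where `Qn n f` agrees with `f`; hence `Qn m (Qn n f) = Qn m f`.

If `n ≤ m`, the level-`m` tiling refines the level-`n` one and contains the clamping bounds
`±2^(n-1)`, so on each level-`m` tile the clamping is affine and lands in a single level-`n` tile:
there `Qn n f` is multi-affine in the first `m` coordinates. Multi-affine interpolation reproduces
multi-affine functions, hence `Qn m (Qn n f) = Qn n f`. -/

open Finset AddSubgroup

lemma abs_bsgn (b : Bool) : |bsgn b| = 1 := by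
  cases b <;> simp [bsgn]

section Interpolation

variable {n : ℕ}

def lamWeight (R y x : ℝ) (b : Bool) : ℝ :=
  if b then (x - y + R / 2) / R else 1 - (x - y + R / 2) / R

lemma lam_eq_sum_lamWeight (f : (Fin n → ℝ) → ℝ) (y : Fin n → ℝ) (R : ℝ) (x : Fin n → ℝ) :
    lam f y R x = ∑ δ : Fin n → Bool, (∏ i, lamWeight R (y i) (x i) (δ i)) * f (vertex y R δ) :=
  rfl

lemma lamWeight_vertex {R : ℝ} (hR : R ≠ 0) (y : ℝ) (b₀ b : Bool) :
    lamWeight R y (y + R / 2 * bsgn b₀) b = if b = b₀ then 1 else 0 := by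
  cases b <;> cases b₀ <;> simp [lamWeight, bsgn, hR]

lemma lamWeight_add_mul (R y p q t : ℝ) (b : Bool) :
    lamWeight R y (p + q * t) b = lamWeight R y p b + bsgn b / R * q * t := by
  cases b <;> simp only [lamWeight, bsgn, if_true, Bool.false_eq_true, if_false] <;> ring

lemma sum_lamWeight_mul_affine {R : ℝ} (hR : R ≠ 0) (y x P Q : ℝ) :
    ∑ b, lamWeight R y x b * (P + Q * (y + R / 2 * bsgn b)) = P + Q * x := by
  simp only [Fintype.sum_bool, lamWeight, bsgn, if_true, Bool.false_eq_true, if_false]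
  field_simp
  ring

lemma vertex_mem_cube (y : Fin n → ℝ) {R : ℝ} (hR : 0 ≤ R) (δ : Fin n → Bool) :
    vertex y R δ ∈ cube y R := fun i => by
  simp [vertex, abs_mul, abs_bsgn, abs_of_nonneg (div_nonneg hR zero_le_two)]

lemma lam_congr {f g : (Fin n → ℝ) → ℝ} {y : Fin n → ℝ} {R : ℝ}
    (h : ∀ δ, f (vertex y R δ) = g (vertex y R δ)) (x : Fin n → ℝ) :
    lam f y R x = lam g y R x :=
  Finset.sum_congr rfl fun δ _ => by rw [h δ]

lemma lam_vertex (f : (Fin n → ℝ) → ℝ) (y : Fin n → ℝ) {R : ℝ} (hR : R ≠ 0)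
    (δ₀ : Fin n → Bool) : lam f y R (vertex y R δ₀) = f (vertex y R δ₀) := by
  have hw : ∀ (δ : Fin n → Bool) i,
      lamWeight R (y i) (vertex y R δ₀ i) (δ i) = if δ i = δ₀ i then 1 else 0 :=
    fun δ i => lamWeight_vertex hR (y i) (δ₀ i) (δ i)
  rw [lam_eq_sum_lamWeight, Fintype.sum_eq_single δ₀]
  · simp [hw]
  · intro δ hδ
    obtain ⟨i, hi⟩ := Function.ne_iff.mp hδ
    rw [prod_eq_zero (mem_univ i) (by simp [hw, hi]), zero_mul]

lemma lamWeight_of_adjacent {R y₁ y₂ x : ℝ} (hR : R ≠ 0)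
    (h : y₁ = y₂ ∨ (|y₁ - y₂| = R ∧ x = (y₁ + y₂) / 2)) (b : Bool) :
    lamWeight R y₁ x b = lamWeight R y₂ x (if y₁ = y₂ then b else !b) ∧
      (lamWeight R y₁ x b ≠ 0 →
        y₁ + R / 2 * bsgn b = y₂ + R / 2 * bsgn (if y₁ = y₂ then b else !b)) := by
  rcases h with rfl | ⟨hd, rfl⟩
  · simp
  rcases (abs_eq (hd ▸ abs_nonneg _)).mp hd with h | h <;>
    obtain rfl := eq_add_of_sub_eq h <;>
    cases b <;> simp [lamWeight, bsgn, hR] <;> ring_nf <;> simp [hR]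

lemma lam_eq_lam_of_adjacent (f : (Fin n → ℝ) → ℝ) {y₁ y₂ : Fin n → ℝ} {R : ℝ} (hR : R ≠ 0)
    {x : Fin n → ℝ} (h : ∀ i, y₁ i = y₂ i ∨ (|y₁ i - y₂ i| = R ∧ x i = (y₁ i + y₂ i) / 2)) :
    lam f y₁ R x = lam f y₂ R x := by
  set flip : (Fin n → Bool) → Fin n → Bool := fun δ i => if y₁ i = y₂ i then δ i else !δ i
  have hflip : Function.Involutive flip := fun δ => funext fun i => by
    by_cases h : y₁ i = y₂ i <;> simp [flip, h]
  have hw := fun i => lamWeight_of_adjacent hR (h i)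
  rw [lam_eq_sum_lamWeight, lam_eq_sum_lamWeight]
  refine Fintype.sum_bijective flip hflip.bijective _ _ fun δ => ?_
  have hprod : ∏ i, lamWeight R (y₁ i) (x i) (δ i) = ∏ i, lamWeight R (y₂ i) (x i) (flip δ i) :=
    prod_congr rfl fun i _ => (hw i (δ i)).1
  by_cases hz : ∏ i, lamWeight R (y₁ i) (x i) (δ i) = 0
  · rw [← hprod, hz, zero_mul, zero_mul]
  · have hv : vertex y₁ R δ = vertex y₂ R (flip δ) := funext fun i =>
      (hw i (δ i)).2 fun h0 => hz (prod_eq_zero (mem_univ i) h0)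
    rw [hprod, hv]

lemma lam_sum_prod_affine {ι : Type*} [Fintype ι] (P Q : ι → Fin n → ℝ) (C : ι → ℝ)
    (y : Fin n → ℝ) {R : ℝ} (hR : R ≠ 0) (x : Fin n → ℝ) :
    lam (fun z => ∑ j, (∏ i, (P j i + Q j i * z i)) * C j) y R x =
      ∑ j, (∏ i, (P j i + Q j i * x i)) * C j := by
  have key : ∀ j, ∑ δ : Fin n → Bool, (∏ i, lamWeight R (y i) (x i) (δ i)) *
      ∏ i, (P j i + Q j i * vertex y R δ i) = ∏ i, (P j i + Q j i * x i) := by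
    intro j
    simp only [← prod_mul_distrib, vertex]
    rw [← Fintype.prod_sum fun i b =>
      lamWeight R (y i) (x i) b * (P j i + Q j i * (y i + R / 2 * bsgn b))]
    exact prod_congr rfl fun i _ => sum_lamWeight_mul_affine hR _ _ _ _
  simp_rw [lam_eq_sum_lamWeight, mul_sum, ← key, sum_mul]
  rw [sum_comm]
  simp only [mul_assoc]

lemma lam_comp_affine {m : ℕ} (F : (Fin n → ℝ) → ℝ) (y : Fin n → ℝ) (R' : ℝ)
    {e : Fin n → Fin m} (he : Function.Injective e) (p q : Fin n → ℝ) (c : Fin m → ℝ) {R : ℝ}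
    (hR : R ≠ 0) (w : Fin m → ℝ) :
    lam (fun z => lam F y R' fun i => p i + q i * z (e i)) c R w =
      lam F y R' fun i => p i + q i * w (e i) := by
  have expand : ∀ z : Fin m → ℝ, (lam F y R' fun i => p i + q i * z (e i)) =
      ∑ δ : Fin n → Bool, (∏ j, (Function.extend e (fun i => lamWeight R' (y i) (p i) (δ i)) 1 j +
        Function.extend e (fun i => bsgn (δ i) / R' * q i) 0 j * z j)) * F (vertex y R' δ) := by
    intro z
    refine sum_congr rfl fun δ _ => congrArg (· * _) <|
      Fintype.prod_of_injective e he _ _ (fun j hj => ?_) fun i => ?_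
    · simp [Function.extend_apply' _ _ _ (by simpa using hj)]
    · rw [he.extend_apply, he.extend_apply]
      exact (lamWeight_add_mul _ _ _ _ _ _).trans (by ring)
  simp only [expand]
  exact lam_sum_prod_affine _ _ _ c hR w

lemma lam_eq_self_of_eqOn_multiaffine {m : ℕ} {G : (Fin m → ℝ) → ℝ} {c : Fin m → ℝ} {R : ℝ}
    (hR : 0 < R) {F : (Fin n → ℝ) → ℝ} {y : Fin n → ℝ} {R' : ℝ} {e : Fin n → Fin m}
    (he : Function.Injective e) {p q : Fin n → ℝ}
    (hG : ∀ z ∈ cube c R, G z = lam F y R' fun i => p i + q i * z (e i)) {w : Fin m → ℝ}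
    (hw : w ∈ cube c R) : lam G c R w = G w := by
  rw [hG w hw, ← lam_comp_affine F y R' he p q c hR.ne' w]
  exact lam_congr (fun δ => hG _ (vertex_mem_cube c hR.le δ)) w

end Interpolation

section Grid

variable {d : ℝ}

lemma add_le_of_lt_of_mem_zmultiples (hd : 0 < d) {x y : ℝ} (hx : x ∈ zmultiples d)
    (hy : y ∈ zmultiples d) (h : x < y) : x + d ≤ y := by
  obtain ⟨k, rfl⟩ := mem_zmultiples_iff.mp hx
  obtain ⟨l, rfl⟩ := mem_zmultiples_iff.mp hy
  simp only [zsmul_eq_mul] at h ⊢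
  have hkl : (k : ℝ) + 1 ≤ l := by exact_mod_cast (lt_of_mul_lt_mul_right h hd.le : (k : ℝ) < l)
  nlinarith

/-- A cell `[c - d/2, c + d/2]` of the grid `dℤ` is given by its centre `c`, with
`c - d/2 ∈ dℤ`. -/
lemma eq_or_adjacent_of_mem_cells (hd : 0 < d) {a c₁ c₂ : ℝ} (h₁ : c₁ - d / 2 ∈ zmultiples d)
    (h₂ : c₂ - d / 2 ∈ zmultiples d) (ha₁ : |a - c₁| ≤ d / 2) (ha₂ : |a - c₂| ≤ d / 2) :
    c₁ = c₂ ∨ (|c₁ - c₂| = d ∧ a = (c₁ + c₂) / 2) := by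
  rw [abs_le] at ha₁ ha₂
  rcases lt_trichotomy (c₁ - d / 2) (c₂ - d / 2) with h | h | h
  · have := add_le_of_lt_of_mem_zmultiples hd h₁ h₂ h
    exact Or.inr ⟨by rw [show c₁ - c₂ = -d by linarith, abs_neg, abs_of_pos hd], by linarith⟩
  · exact Or.inl (by linarith)
  · have := add_le_of_lt_of_mem_zmultiples hd h₂ h₁ h
    exact Or.inr ⟨by rw [show c₁ - c₂ = d by linarith, abs_of_pos hd], by linarith⟩

end Grid

section Clamp

variable {R : ℝ}

lemma clamp_eq_self {t : ℝ} (h : |t| ≤ R / 2) : clamp R t = t := by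
  rw [abs_le] at h
  rw [clamp, min_eq_right h.2, max_eq_right h.1]

lemma abs_clamp_le (hR : 0 ≤ R) (t : ℝ) : |clamp R t| ≤ R / 2 := by
  rw [clamp, abs_le]
  exact ⟨le_max_left _ _, max_le (by linarith) (min_le_left _ _)⟩

lemma clamp_clamp {R' : ℝ} (hR : 0 ≤ R) (h : R ≤ R') (t : ℝ) :
    clamp R (clamp R' t) = clamp R t := by
  simp only [clamp, max_def, min_def]
  split_ifs <;> linarith

lemma clamp_const_or_id {a b : ℝ} (h₁ : R / 2 ∉ Set.Ioo a b) (h₂ : -(R / 2) ∉ Set.Ioo a b) :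
    (∀ t ∈ Set.Icc a b, clamp R t = clamp R a) ∨ ∀ t ∈ Set.Icc a b, clamp R t = t := by
  simp only [Set.mem_Ioo, not_and_or, not_lt] at h₁ h₂
  by_cases hb : b ≤ -(R / 2)
  · refine Or.inl fun t ht => ?_
    simp only [clamp]
    rw [max_eq_left ((min_le_right _ _).trans (ht.2.trans hb)),
      max_eq_left ((min_le_right _ _).trans (ht.1.trans (ht.2.trans hb)))]
  by_cases ha : R / 2 ≤ a
  · refine Or.inl fun t ht => ?_
    simp only [clamp]
    rw [min_eq_left (ha.trans ht.1), min_eq_left ha]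
  · refine Or.inr fun t ht => clamp_eq_self (abs_le.mpr ⟨?_, ?_⟩)
    · rcases h₂ with h | h <;> linarith [ht.1, ht.2]
    · rcases h₁ with h | h <;> linarith [ht.1, ht.2]

end Clamp

section Cells

variable {d R c : ℝ}

lemma clamp_const_or_id_on_cell (hd : 0 < d) (hR : R / 2 ∈ zmultiples d)
    (hc : c - d / 2 ∈ zmultiples d) :
    (∀ t, |t - c| ≤ d / 2 → clamp R t = clamp R c) ∨ ∀ t, |t - c| ≤ d / 2 → clamp R t = t := by
  have hgap : ∀ x ∈ zmultiples d, x ∉ Set.Ioo (c - d / 2) (c + d / 2) := fun x hx h => by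
    have := add_le_of_lt_of_mem_zmultiples hd hc hx h.1
    linarith [h.2]
  have hIcc : ∀ t, |t - c| ≤ d / 2 → t ∈ Set.Icc (c - d / 2) (c + d / 2) := fun t ht => by
    rw [abs_le] at ht
    constructor <;> linarith
  have hc_mem : |c - c| ≤ d / 2 := by rw [sub_self, abs_zero]; positivity
  rcases clamp_const_or_id (hgap _ hR) (hgap _ (neg_mem hR)) with h | h
  · exact Or.inl fun t ht => by rw [h t (hIcc t ht), h c (hIcc c hc_mem)]
  · exact Or.inr fun t ht => h t (hIcc t ht)

lemma abs_clamp_sub_le_of_cell (hd : 0 < d) (hR : R / 2 ∈ zmultiples d)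
    (hc : c - d / 2 ∈ zmultiples d) {d' c' : ℝ} (hd' : d' ∈ zmultiples d)
    (hc' : c' - d' / 2 ∈ zmultiples d') (hcc' : |clamp R c - c'| ≤ d' / 2) {t : ℝ}
    (ht : |t - c| ≤ d / 2) : |clamp R t - c'| ≤ d' / 2 := by
  rcases clamp_const_or_id_on_cell hd hR hc with h | h
  · rwa [h t ht]
  rw [h t ht]
  rw [h c (by rw [sub_self, abs_zero]; positivity)] at hcc'
  have hL : c' - d' / 2 ∈ zmultiples d := zmultiples_le.mpr hd' hc'
  have hU : c' + d' / 2 ∈ zmultiples d :=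
    (show c' - d' / 2 + d' = c' + d' / 2 by ring) ▸ add_mem hL hd'
  have hc_add : c + d / 2 ∈ zmultiples d :=
    (show c - d / 2 + d = c + d / 2 by ring) ▸ add_mem hc (mem_zmultiples d)
  rw [abs_le] at ht hcc' ⊢
  have hlow : c' - d' / 2 ≤ c - d / 2 := by
    by_contra! hlt
    linarith [add_le_of_lt_of_mem_zmultiples hd hc hL hlt]
  have hup : c + d / 2 ≤ c' + d' / 2 := by
    by_contra! hlt
    linarith [add_le_of_lt_of_mem_zmultiples hd hU hc_add hlt]
  constructor <;> linarith

end Cells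

local notation "mesh " n:max => ((2 : ℝ) ^ (1 - (n : ℤ)))

section Dyadic

variable {n : ℕ}

lemma mesh_pos (n : ℕ) : 0 < mesh n := zpow_pos two_pos _

lemma two_pow_div_two (n : ℕ) : (2 : ℝ) ^ n / 2 = 2 ^ ((n : ℤ) - 1) := by
  rw [zpow_sub₀ two_ne_zero, zpow_natCast, zpow_one]

lemma mesh_mul_two_zpow (n : ℕ) : mesh n * 2 ^ ((n : ℤ) - 1) = 1 := by
  rw [← zpow_add₀ two_ne_zero]
  simp

lemma two_pow_two_mul_sub_two (hn : 0 < n) :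
    (2 : ℝ) ^ (2 * n - 2) = 2 ^ ((n : ℤ) - 1) * 2 ^ ((n : ℤ) - 1) := by
  rw [← zpow_add₀ two_ne_zero, ← zpow_natCast]
  congr 1
  omega

lemma two_zpow_mem_zmultiples {a b : ℤ} (h : a ≤ b) :
    (2 : ℝ) ^ b ∈ zmultiples ((2 : ℝ) ^ a) := by
  obtain ⟨k, hk⟩ := Int.eq_ofNat_of_zero_le (sub_nonneg.mpr h)
  refine mem_zmultiples_iff.mpr ⟨2 ^ k, ?_⟩
  rw [zsmul_eq_mul, Int.cast_pow, Int.cast_ofNat, ← zpow_natCast, ← zpow_add₀ two_ne_zero]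
  congr 1
  omega

lemma zmultiples_mesh_le {m : ℕ} (h : n ≤ m) : zmultiples (mesh n) ≤ zmultiples (mesh m) :=
  zmultiples_le.mpr (two_zpow_mem_zmultiples (by omega))

lemma two_pow_div_two_mem_zmultiples_mesh {m : ℕ} (hn : 0 < n) (hm : 0 < m) :
    (2 : ℝ) ^ n / 2 ∈ zmultiples (mesh m) :=
  two_pow_div_two n ▸ two_zpow_mem_zmultiples (by omega)

lemma gridPt_zero_pred_apply (ε : Fin n → Bool) (h : Fin n → ℕ) (i : Fin n) :
    gridPt ε 0 h (n - 1) i = bsgn (ε i) * (mesh n / 2 + mesh n * h i) := by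
  have hn : ((n - 1 : ℕ) : ℤ) = n - 1 := Nat.cast_pred i.pos
  simp only [gridPt, Pi.zero_apply, zero_add, hn, neg_sub, zpow_sub₀ (two_ne_zero' ℝ) _ 1,
    zpow_one]
  ring

lemma gridPt_sub_half_mem_zmultiples (ε : Fin n → Bool) (h : Fin n → ℕ) (i : Fin n) :
    gridPt ε 0 h (n - 1) i - mesh n / 2 ∈ zmultiples (mesh n) := by
  rw [gridPt_zero_pred_apply, mem_zmultiples_iff]
  cases ε i
  · exact ⟨-(h i + 1 : ℤ), by simp [bsgn]; ring⟩
  · exact ⟨h i, by simp [bsgn]; ring⟩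

lemma natCast_min_floor_le {T : ℝ} {N : ℕ} (hT : 0 ≤ T) (hTN : T ≤ N) (hN : 1 ≤ N) :
    ((min ⌊T⌋₊ (N - 1) : ℕ) : ℝ) ≤ T ∧ T ≤ (min ⌊T⌋₊ (N - 1) : ℕ) + 1 := by
  rcases le_total ⌊T⌋₊ (N - 1) with h | h
  · rw [min_eq_left h]
    exact ⟨Nat.floor_le hT, (Nat.lt_floor_add_one T).le⟩
  · rw [min_eq_right h]
    refine ⟨(Nat.cast_le.mpr h).trans (Nat.floor_le hT), ?_⟩
    rwa [Nat.cast_sub hN, Nat.cast_one, sub_add_cancel]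

lemma mesh_mul_hChoice_le (w : Fin n → ℝ) (i : Fin n) (hw : |w i| ≤ (2 : ℝ) ^ n / 2) :
    mesh n * hChoice n w i ≤ |w i| ∧ |w i| ≤ mesh n * (hChoice n w i + 1) := by
  set T := |w i| * (2 : ℝ) ^ ((n : ℤ) - 1)
  have hwT : |w i| = mesh n * T := by rw [mul_left_comm, mesh_mul_two_zpow, mul_one]
  have hTN : T ≤ ((2 ^ (2 * n - 2) : ℕ) : ℝ) := by
    rw [Nat.cast_pow, Nat.cast_ofNat, two_pow_two_mul_sub_two i.pos]
    exact mul_le_mul_of_nonneg_right (hw.trans_eq (two_pow_div_two n)) (by positivity)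
  obtain ⟨hlo, hhi⟩ := natCast_min_floor_le (by positivity) hTN Nat.one_le_two_pow
  have hh : hChoice n w i = min ⌊T⌋₊ (2 ^ (2 * n - 2) - 1) := by
    simp only [hChoice, Int.floor_toNat, T]
  rw [hh, hwT]
  exact ⟨mul_le_mul_of_nonneg_left hlo (mesh_pos n).le,
    mul_le_mul_of_nonneg_left hhi (mesh_pos n).le⟩

lemma abs_sub_gridPt_choice_le (w : Fin n → ℝ) (i : Fin n) (hw : |w i| ≤ (2 : ℝ) ^ n / 2) :
    |w i - gridPt (epsChoice w) 0 (hChoice n w) (n - 1) i| ≤ mesh n / 2 := by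
  obtain ⟨hlo, hhi⟩ := mesh_mul_hChoice_le w i hw
  rw [gridPt_zero_pred_apply, abs_le]
  by_cases hw0 : 0 ≤ w i
  · rw [abs_of_nonneg hw0] at hlo hhi
    simp only [epsChoice, hw0, decide_true, bsgn, if_true, one_mul]
    constructor <;> linarith
  · rw [abs_of_neg (not_le.mp hw0)] at hlo hhi
    simp only [epsChoice, hw0, decide_false, bsgn, Bool.false_eq_true, if_false]
    constructor <;> linarith

end Dyadic

section Projection

variable {n : ℕ}

/-- Adjacent cubes of the tiling interpolate consistently on their common face. -/
lemma Pn_eq_lam (F : (Fin n → ℝ) → ℝ) (u : Fin n → ℝ) {c : Fin n → ℝ}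
    (hc : ∀ i, c i - mesh n / 2 ∈ zmultiples (mesh n))
    (hu : clampCube ((2 : ℝ) ^ n) u ∈ cube c (mesh n)) :
    Pn n F u = lam F c (mesh n) (clampCube ((2 : ℝ) ^ n) u) :=
  lam_eq_lam_of_adjacent F (mesh_pos n).ne' fun i =>
    eq_or_adjacent_of_mem_cells (mesh_pos n) (gridPt_sub_half_mem_zmultiples _ _ i) (hc i)
      (abs_sub_gridPt_choice_le _ i (abs_clamp_le (by positivity) _)) (hu i)

lemma Pn_eq_of_mem_grid (F : (Fin n → ℝ) → ℝ) {x : Fin n → ℝ}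
    (hx : ∀ i, x i ∈ zmultiples (mesh n) ∧ |x i| ≤ (2 : ℝ) ^ n / 2) : Pn n F x = F x := by
  set c : Fin n → ℝ := fun i => x i + mesh n / 2
  have hclamp : clampCube ((2 : ℝ) ^ n) x = x := funext fun i => clamp_eq_self (hx i).2
  have hvertex : vertex c (mesh n) (fun _ => false) = x := funext fun i => by
    simp [c, vertex, bsgn]
  have hmem : x ∈ cube c (mesh n) := hvertex ▸ vertex_mem_cube c (mesh_pos n).le _
  rw [Pn_eq_lam F x (fun i => by simpa [c] using (hx i).1) (hclamp ▸ hmem), hclamp]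
  conv_lhs => rw [← hvertex]
  rw [lam_vertex F c (mesh_pos n).ne', hvertex]

lemma mem_zmultiples_of_mem_Vn {v : Fin n → ℝ} (hv : v ∈ Vn n) (i : Fin n) :
    v i ∈ zmultiples (mesh n) ∧ |v i| ≤ (2 : ℝ) ^ n / 2 := by
  obtain ⟨ε, h, δ, hh, rfl⟩ := hv
  have hn := i.pos
  have hgrid := gridPt_sub_half_mem_zmultiples ε h i
  simp only [vertex]
  constructor
  · cases δ i
    · simpa [bsgn, ← sub_eq_add_neg] using hgrid
    · convert add_mem hgrid (mem_zmultiples (mesh n)) using 1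
      simp only [bsgn, if_true]
      ring
  · have hh' : (h i : ℝ) + 1 ≤ 2 ^ (2 * n - 2) := by
      have := hh i
      have := @Nat.one_le_two_pow (2 * n - 2)
      exact_mod_cast (by omega : h i + 1 ≤ 2 ^ (2 * n - 2))
    have hbound : mesh n * 2 ^ (2 * n - 2) = (2 : ℝ) ^ n / 2 := by
      rw [two_pow_two_mul_sub_two hn, ← mul_assoc, mesh_mul_two_zpow, one_mul, two_pow_div_two]
    calc |gridPt ε 0 h (n - 1) i + mesh n / 2 * bsgn (δ i)|
        ≤ |gridPt ε 0 h (n - 1) i| + |mesh n / 2 * bsgn (δ i)| := abs_add_le _ _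
      _ = mesh n * (h i + 1) := by
        rw [gridPt_zero_pred_apply, abs_mul, abs_mul, abs_bsgn, abs_bsgn,
          abs_of_nonneg (by positivity), abs_of_nonneg (by positivity)]
        ring
      _ ≤ mesh n * 2 ^ (2 * n - 2) := mul_le_mul_of_nonneg_left hh' (mesh_pos n).le
      _ = (2 : ℝ) ^ n / 2 := hbound

lemma Pn_congr {g g' : (Fin n → ℝ) → ℝ} (h : ∀ v ∈ Vn n, g v = g' v) (u : Fin n → ℝ) :
    Pn n g u = Pn n g' u :=
  lam_congr (fun δ => h _ ⟨_, _, δ, fun _ => min_le_right _ _, rfl⟩) _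

lemma Pn_congr_clampCube (F : (Fin n → ℝ) → ℝ) {u u' : Fin n → ℝ}
    (h : clampCube ((2 : ℝ) ^ n) u = clampCube ((2 : ℝ) ^ n) u') : Pn n F u = Pn n F u' := by
  simp only [Pn, h]

end Projection

section Restriction

variable {n m : ℕ}

/-- The clamping is affine on a cube of the finer tiling and maps it into a single cube of the
coarser one. -/
lemma Pn_comp_castLE_eq_lam_affine (hnm : n ≤ m) (F : (Fin n → ℝ) → ℝ) {c : Fin m → ℝ}
    (hc : ∀ i, c i - mesh m / 2 ∈ zmultiples (mesh m)) :
    ∃ y p q : Fin n → ℝ, ∀ z ∈ cube c (mesh m),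
      Pn n F (fun i => z (Fin.castLE hnm i)) =
        lam F y (mesh n) fun i => p i + q i * z (Fin.castLE hnm i) := by
  set v : Fin n → ℝ := clampCube ((2 : ℝ) ^ n) fun i => c (Fin.castLE hnm i)
  set y := gridPt (epsChoice v) 0 (hChoice n v) (n - 1)
  have hy : ∀ i, y i - mesh n / 2 ∈ zmultiples (mesh n) := gridPt_sub_half_mem_zmultiples _ _
  have hR : ∀ i : Fin n, (2 : ℝ) ^ n / 2 ∈ zmultiples (mesh m) := fun i =>
    two_pow_div_two_mem_zmultiples_mesh i.pos (i.pos.trans_le hnm)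
  have hcell : ∀ i, ∀ z ∈ cube c (mesh m),
      |clamp ((2 : ℝ) ^ n) (z (Fin.castLE hnm i)) - y i| ≤ mesh n / 2 := fun i z hz =>
    abs_clamp_sub_le_of_cell (mesh_pos m) (hR i) (hc _)
      (zmultiples_mesh_le hnm (mem_zmultiples _)) (hy i)
      (abs_sub_gridPt_choice_le v i (abs_clamp_le (by positivity) _)) (hz _)
  have haff : ∀ i, ∃ p q : ℝ, ∀ z ∈ cube c (mesh m),
      clamp ((2 : ℝ) ^ n) (z (Fin.castLE hnm i)) = p + q * z (Fin.castLE hnm i) := fun i =>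
    (clamp_const_or_id_on_cell (mesh_pos m) (hR i) (hc (Fin.castLE hnm i))).elim
      (fun h => ⟨_, 0, fun z hz => by rw [h _ (hz _), zero_mul, add_zero]⟩)
      (fun h => ⟨0, 1, fun z hz => by rw [h _ (hz _), zero_add, one_mul]⟩)
  choose p q hpq using haff
  refine ⟨y, p, q, fun z hz => ?_⟩
  rw [Pn_eq_lam F _ hy fun i => hcell i z hz]
  exact congrArg _ (funext fun i => hpq i z hz)

lemma Pn_comp_castLE (hnm : n ≤ m) (F : (Fin n → ℝ) → ℝ) (u : Fin m → ℝ) :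
    Pn m (fun z => Pn n F fun i => z (Fin.castLE hnm i)) u =
      Pn n F fun i => u (Fin.castLE hnm i) := by
  set w := clampCube ((2 : ℝ) ^ m) u
  obtain ⟨y, p, q, hG⟩ := Pn_comp_castLE_eq_lam_affine hnm F
    (gridPt_sub_half_mem_zmultiples (epsChoice w) (hChoice m w))
  refine (lam_eq_self_of_eqOn_multiaffine (mesh_pos m) (Fin.castLE_injective hnm) hG
    fun i => abs_sub_gridPt_choice_le w i (abs_clamp_le (by positivity) _)).trans ?_
  exact Pn_congr_clampCube F <| funext fun i =>
    clamp_clamp (by positivity) (pow_le_pow_right₀ one_le_two hnm) _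

lemma rho_tau_apply (u : Fin m → ℝ) (i : Fin n) :
    rho n (tau m u) i = if h : (i : ℕ) < m then u ⟨i, h⟩ else 0 :=
  rfl

lemma tau_rho_tau (hmn : m ≤ n) (u : Fin m → ℝ) : tau n (rho n (tau m u)) = tau m u := by
  refine lp.ext (funext fun j => ?_)
  change (if h : j < n then (if h' : j < m then u ⟨j, h'⟩ else 0) else 0) =
    if h : j < m then u ⟨j, h⟩ else 0
  split_ifs <;> first | rfl | omega

lemma Qn_tau_of_mem_Vn (hmn : m ≤ n) (f : EllOne → ℝ) {v : Fin m → ℝ} (hv : v ∈ Vn m) :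
    Qn n f (tau m v) = f (tau m v) := by
  refine (Pn_eq_of_mem_grid _ fun i => ?_).trans (congrArg f (tau_rho_tau hmn v))
  rw [rho_tau_apply]
  split_ifs with h
  · obtain ⟨hgrid, hbound⟩ := mem_zmultiples_of_mem_Vn hv ⟨i, h⟩
    exact ⟨zmultiples_mesh_le hmn hgrid, hbound.trans (by gcongr; exact one_le_two)⟩
  · exact ⟨zero_mem _, by rw [abs_zero]; positivity⟩

end Restriction

theorem Qn_commute_general (m n : ℕ) (f : EllOne → ℝ) :
    Qn m (Qn n f) = Qn (min m n) f := by
  funext x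
  rcases le_total m n with hmn | hnm
  · rw [min_eq_left hmn]
    exact Pn_congr (fun v hv => Qn_tau_of_mem_Vn hmn f hv) _
  · rw [min_eq_right hnm]
    have hrestrict : ∀ u : Fin m → ℝ, rho n (tau m u) = fun i => u (Fin.castLE hnm i) :=
      fun u => funext fun i => dif_pos (i.isLt.trans_le hnm)
    simp only [Qn, hrestrict]
    exact Pn_comp_castLE hnm _ _

/-- **Statement 11.** For all `m, n ≥ 1` and every Lipschitz `f : ℓ₁ → ℝ` with
`f(0) = 0`, the operators `Q_n` satisfy `Q_m(Q_n(f)) = Q_{min(m,n)}(f)`. -/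
theorem Qn_commute (m n : ℕ) (hm : 0 < m) (hn : 0 < n)
    (f : EllOne → ℝ) (hf : ∃ K : ℝ≥0, LipschitzWith K f) (hf0 : f 0 = 0) :
    Qn m (Qn n f) = Qn (min m n) f :=
  Qn_commute_general m n f
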